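/- For positive semidefinite operators ρ, σ, ω on a finite-dimensional Hilbert space with ω ≥ ρ (Loewner order), the fidelity-type quantity ‖√ω √σ‖₁ is at least ‖√ρ √σ‖₁, where ‖·‖₁ is the trace norm. -/

import Mathlib

/-!
Writing `‖√τ √σ‖₁ = tr √(√σ τ √σ)`, the claim follows from three monotonicity facts in the
Loewner order: conjugation by `√σ` preserves `ρ ≤ ω`, the square root is operator monotone,
and the trace is monotone.
-/

open scoped ComplexOrder Kronecker
open Matrix Classical

noncomputable def msqrt {n : Type*} [Fintype n] [DecidableEq n] (A : Matrix n n ℂ) :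
    Matrix n n ℂ :=
  if h : A.PosSemidef then
    h.1.eigenvectorUnitary.1 * diagonal ((↑) ∘ (√·) ∘ h.1.eigenvalues) *
      (star h.1.eigenvectorUnitary : Matrix n n ℂ)
  else 0

noncomputable def traceNorm {n : Type*} [Fintype n] [DecidableEq n] (A : Matrix n n ℂ) : ℝ :=
  (msqrt (Aᴴ * A)).trace.re

noncomputable def fid {n : Type*} [Fintype n] [DecidableEq n] (ρ σ : Matrix n n ℂ) : ℝ :=
  traceNorm (msqrt ρ * msqrt σ) + Real.sqrt ((1 - ρ.trace.re) * (1 - σ.trace.re))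

noncomputable def pdist {n : Type*} [Fintype n] [DecidableEq n] (ρ σ : Matrix n n ℂ) : ℝ :=
  Real.sqrt (1 - (fid ρ σ) ^ 2)

/-- Loewner order: `A ≤ B` iff `B - A` is positive semidefinite. -/
def loewnerLE {n : Type*} [Fintype n] (A B : Matrix n n ℂ) : Prop := (B - A).PosSemidef

/-- Max-relative entropy `D_max(ρ‖σ) = min {λ : ρ ≤ 2^λ σ}`. -/
noncomputable def Dmax {n : Type*} [Fintype n] (ρ σ : Matrix n n ℂ) : ℝ :=
  sInf {l : ℝ | loewnerLE ρ (((2 : ℝ) ^ l) • σ)}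

def Subnormalized {n : Type*} [Fintype n] (ρ : Matrix n n ℂ) : Prop :=
  ρ.PosSemidef ∧ 0 < ρ.trace.re ∧ ρ.trace.re ≤ 1

def IsDensity {n : Type*} [Fintype n] (ρ : Matrix n n ℂ) : Prop :=
  ρ.PosSemidef ∧ ρ.trace = 1

-- The L2 operator norm makes `Matrix n n ℂ` a C⋆-algebra, where `CFC.sqrt_le_sqrt` applies.
open scoped MatrixOrder Matrix.Norms.L2Operator

section
variable {n : Type*} [Fintype n]

lemma Matrix.trace_re_mono {A B : Matrix n n ℂ} (h : A ≤ B) : A.trace.re ≤ B.trace.re := by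
  simpa [trace_sub] using (Complex.le_def.mp (le_iff.mp h).trace_nonneg).1

variable [DecidableEq n]

lemma msqrt_eq_cfcSqrt (A : Matrix n n ℂ) : msqrt A = CFC.sqrt A := by
  by_cases hA : A.PosSemidef
  · rw [msqrt, dif_pos hA, CFC.sqrt_eq_cfc, cfc_nnreal_eq_real _ A hA.nonneg, hA.1.cfc_eq]
    simp only [IsHermitian.cfc]
    congr 3
    funext i
    simp [max_eq_left (hA.eigenvalues_nonneg i)]
  · rw [msqrt, dif_neg hA, CFC.sqrt_of_not_nonneg (mt LE.le.posSemidef hA)]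

lemma traceNorm_eq_trace_cfcSqrt (A : Matrix n n ℂ) :
    traceNorm A = (CFC.sqrt (Aᴴ * A)).trace.re := by
  rw [traceNorm, msqrt_eq_cfcSqrt]

lemma isHermitian_msqrt (A : Matrix n n ℂ) : (msqrt A).IsHermitian := by
  rw [msqrt_eq_cfcSqrt]
  exact (CFC.sqrt_nonneg A).posSemidef.1

lemma msqrt_mul_self {A : Matrix n n ℂ} (hA : A.PosSemidef) : msqrt A * msqrt A = A := by
  rw [msqrt_eq_cfcSqrt]
  exact CFC.sqrt_mul_sqrt_self A hA.nonneg

lemma conjTranspose_mul_self_msqrt_mul {τ : Matrix n n ℂ} (hτ : τ.PosSemidef)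
    (σ : Matrix n n ℂ) :
    (msqrt τ * msqrt σ)ᴴ * (msqrt τ * msqrt σ) = msqrt σ * τ * msqrt σ := by
  rw [conjTranspose_mul, (isHermitian_msqrt τ).eq, (isHermitian_msqrt σ).eq, Matrix.mul_assoc,
    ← Matrix.mul_assoc (msqrt τ), msqrt_mul_self hτ, Matrix.mul_assoc]

end

theorem stmt4_general {n : Type*} [Fintype n] [DecidableEq n] (ρ σ ω : Matrix n n ℂ)
    (hρ : ρ.PosSemidef) (hω : ω.PosSemidef)
    (h : loewnerLE ρ ω) :
    traceNorm (msqrt ρ * msqrt σ) ≤ traceNorm (msqrt ω * msqrt σ) := by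
  rw [traceNorm_eq_trace_cfcSqrt, traceNorm_eq_trace_cfcSqrt, conjTranspose_mul_self_msqrt_mul hρ,
    conjTranspose_mul_self_msqrt_mul hω]
  exact Matrix.trace_re_mono
    (CFC.sqrt_le_sqrt _ _ ((isHermitian_msqrt σ).isSelfAdjoint.conjugate_le_conjugate h))

theorem stmt4 {n : Type*} [Fintype n] [DecidableEq n] (ρ σ ω : Matrix n n ℂ)
    (hρ : ρ.PosSemidef) (hσ : σ.PosSemidef) (hω : ω.PosSemidef)
    (h : loewnerLE ρ ω) :
    traceNorm (msqrt ρ * msqrt σ) ≤ traceNorm (msqrt ω * msqrt σ) :=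
  stmt4_general ρ σ ω hρ hω h
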